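/- arXiv:2506.23375 — 7 statements merged into one kernel-verified Lean document; each statement's English description precedes it below -/
import Mathlib

section
/- For any graph G, the first homology monoid H₁(G, ℕ) is generated, as an additive monoid, by its minimal elements: every element of H₁(G, ℕ) is a finite sum of minimal elements. -/
/-- The first homology monoid `H₁(G,ℕ)` of a graph `G = (E,V,s,t)` with coefficients in `ℕ`:
the additive submonoid of 1-cycles in `C₁(G,ℕ) = E →₀ ℕ`, i.e. those 1-chains `c` with
`C[s](c) = C[t](c)`, where `C[s], C[t]` are induced by the source and target maps. -/
noncomputable def graphH1 {E V : Type*} (s t : E → V) : AddSubmonoid (E →₀ ℕ) where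
  carrier := {c | Finsupp.mapDomain s c = Finsupp.mapDomain t c}
  add_mem' := by
    intro a b ha hb
    simp only [Set.mem_setOf_eq, Finsupp.mapDomain_add] at *
    rw [ha, hb]
  zero_mem' := by
    simp only [Set.mem_setOf_eq, Finsupp.mapDomain_zero]

/-- `x` is a minimal element of `H₁(G,ℕ)` for the canonical preorder (`y ≤ x` iff `y + a = x`
for some `a ∈ H₁(G,ℕ)`): `x` is a nonzero cycle and every cycle `y ≤ x` is `x` or `0`. -/
def IsMinimalCycle {E V : Type*} (s t : E → V) (x : E →₀ ℕ) : Prop :=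
  x ∈ graphH1 s t ∧ x ≠ 0 ∧
    ∀ y ∈ graphH1 s t, (∃ a ∈ graphH1 s t, y + a = x) → y = x ∨ y = 0

def AddSubmonoid.minimalElements {M : Type*} [AddMonoid M] (S : AddSubmonoid M) : Set M :=
  {x | x ∈ S ∧ x ≠ 0 ∧ ∀ y ∈ S, (∃ a ∈ S, y + a = x) → y = x ∨ y = 0}

/-- A non-minimal element splits as `y + a` with both summands nonzero and strictly below it in
the ambient order, so well-founded induction applies; `E →₀ ℕ` with its pointwise order is such
an `M`. -/
theorem AddSubmonoid.mem_closure_minimalElements {M : Type*} [AddCommMonoid M] [PartialOrder M]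
    [CanonicallyOrderedAdd M] [AddLeftStrictMono M] [WellFoundedLT M] (S : AddSubmonoid M)
    {c : M} (hc : c ∈ S) : c ∈ closure S.minimalElements := by
  induction c using WellFoundedLT.induction with
  | _ c ih =>
    by_cases hc0 : c = 0
    · exact hc0 ▸ zero_mem _
    by_cases hmin : c ∈ S.minimalElements
    · exact subset_closure hmin
    obtain ⟨y, hy, a, ha, rfl, hyc, hy0⟩ : ∃ y ∈ S, ∃ a ∈ S, y + a = c ∧ y ≠ c ∧ y ≠ 0 := by
      simpa [minimalElements, hc, hc0] using hmin
    have ha0 : a ≠ 0 := by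
      rintro rfl
      exact hyc (add_zero y).symm
    have hy_lt : y < y + a := lt_add_of_pos_right y (pos_iff_ne_zero.mpr ha0)
    have ha_lt : a < y + a := add_comm a y ▸ lt_add_of_pos_right a (pos_iff_ne_zero.mpr hy0)
    exact add_mem (ih y hy_lt hy) (ih a ha_lt ha)

/-- For any graph `G`, the monoid `H₁(G,ℕ)` is generated by its minimal
elements: every 1-cycle is a finite sum of minimal cycles. -/
theorem h1_generated_by_minimal_elements {E V : Type*} (s t : E → V) :
    ∀ c ∈ graphH1 s t, c ∈ AddSubmonoid.closure {x : E →₀ ℕ | IsMinimalCycle s t x} :=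
  fun _ hc => (graphH1 s t).mem_closure_minimalElements hc
end

section
/- Let G be a graph and C a commutative monoid. If two additive monoid homomorphisms f, g : H₁(G, ℕ) → C agree on every minimal element of H₁(G, ℕ), then f = g. (In particular, for a C-labeled graph (G, ℓ), the feedback homomorphism ℓ̃ : H₁(G,ℕ) → C extending ℓ is determined by its values on minimal cycles.) -/
section NatGrading

variable {M : Type*} [AddMonoid M]

theorem isAddUnit_iff_eq_zero_of_nat_grading (deg : M →+ ℕ) (hdeg : ∀ x, deg x = 0 → x = 0)
    {u : M} : IsAddUnit u ↔ u = 0 :=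
  ⟨fun hu => hdeg u (isAddUnit_iff_eq_zero.mp (hu.map deg)), fun hu => hu ▸ isAddUnit_zero⟩

theorem AddSubmonoid.closure_addIrreducible_of_nat_grading (deg : M →+ ℕ)
    (hdeg : ∀ x, deg x = 0 → x = 0) : AddSubmonoid.closure {p : M | AddIrreducible p} = ⊤ := by
  refine (AddSubmonoid.eq_top_iff' _).mpr fun x => ?_
  induction hn : deg x using Nat.strong_induction_on generalizing x with
  | _ n ih =>
    by_cases hx : AddIrreducible x
    · exact AddSubmonoid.subset_closure hx
    by_cases hx0 : x = 0
    · exact hx0 ▸ zero_mem _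
    obtain ⟨a, b, rfl, ha, hb⟩ : ∃ a b, x = a + b ∧ a ≠ 0 ∧ b ≠ 0 := by
      simpa [addIrreducible_iff, isAddUnit_iff_eq_zero_of_nat_grading deg hdeg, hx0] using hx
    have ha' : 0 < deg a := Nat.pos_of_ne_zero (ha ∘ hdeg a)
    have hb' : 0 < deg b := Nat.pos_of_ne_zero (hb ∘ hdeg b)
    rw [map_add] at hn
    exact add_mem (ih _ (by omega) a rfl) (ih _ (by omega) b rfl)

end NatGrading

theorem graphH1.eq_zero_of_degree_eq_zero {E V : Type*} {s t : E → V} (x : graphH1 s t)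
    (hx : Finsupp.degree (x : E →₀ ℕ) = 0) : x = 0 :=
  Subtype.ext ((Finsupp.degree_eq_zero_iff _).mp hx)

theorem AddIrreducible.isMinimalCycle {E V : Type*} {s t : E → V} {x : graphH1 s t}
    (hx : AddIrreducible x) : IsMinimalCycle s t x := by
  have hunit {u : graphH1 s t} : IsAddUnit u ↔ u = 0 := isAddUnit_iff_eq_zero_of_nat_grading
    (Finsupp.degree.comp (graphH1 s t).subtype) graphH1.eq_zero_of_degree_eq_zero
  refine ⟨x.2, fun h => hx.ne_zero (Subtype.ext h), fun y hy ⟨a, ha, hya⟩ => ?_⟩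
  have hsplit : x = ⟨y, hy⟩ + ⟨a, ha⟩ := Subtype.ext hya.symm
  rcases hx.isAddUnit_or_isAddUnit hsplit with hy0 | ha0
  · exact Or.inr (congrArg Subtype.val (hunit.mp hy0))
  · obtain rfl : a = 0 := congrArg Subtype.val (hunit.mp ha0)
    exact Or.inl (by simpa using hya)

/-- Two additive monoid homomorphisms `f, g : H₁(G,ℕ) → C` that agree on every
minimal element of `H₁(G,ℕ)` are equal.  (In particular the feedback homomorphism of a
`C`-labeled graph is determined by its values on minimal cycles.) -/
theorem h1_hom_determined_by_minimal_elements
    {E V : Type*} (s t : E → V) {C : Type*} [AddCommMonoid C]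
    (f g : (graphH1 s t) →+ C)
    (h : ∀ x : graphH1 s t, IsMinimalCycle s t (x : E →₀ ℕ) → f x = g x) :
    f = g :=
  AddMonoidHom.eq_of_eqOn_denseM
    (AddSubmonoid.closure_addIrreducible_of_nat_grading
      (Finsupp.degree.comp (graphH1 s t).subtype) graphH1.eq_zero_of_degree_eq_zero)
    fun x hx => h x hx.isMinimalCycle
end

section
/- If γ is a simple loop in a graph G, then its associated 1-chain [γ] ∈ H₁(G, ℕ) is a minimal element of H₁(G, ℕ). -/
private lemma sum_single_apply' {E : Type*} {ι : Type*} [Fintype ι] [DecidableEq E]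
    (v : ι → E) (w : ι → ℕ) (u : E) :
    ((∑ i, Finsupp.single (v i) (w i)) : E →₀ ℕ) u = ∑ i, if v i = u then w i else 0 := by
  rw [Finsupp.finset_sum_apply]
  simp [Finsupp.single_apply]

private lemma mapDomain_sum_single' {E V : Type*} {ι : Type*} [Fintype ι] (s : E → V)
    (v : ι → E) (w : ι → ℕ) :
    Finsupp.mapDomain s (∑ i, Finsupp.single (v i) (w i)) = ∑ i, Finsupp.single (s (v i)) (w i) := by
  rw [Finsupp.mapDomain_finset_sum]
  simp [Finsupp.mapDomain_single]

/-- If `γ` is a simple loop in a graph `G` — edges `e : Fin n → E` with `n ≥ 1`,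
`t (e i) = s (e (i+1))` (indices mod `n`), and the vertices `s (e i)` pairwise distinct —
then its associated 1-chain `[γ] = ∑ i, single (e i) 1` is a minimal element of `H₁(G,ℕ)`. -/
theorem chain_of_simple_loop_is_minimal_cycle
    {E V : Type*} (s t : E → V) {n : ℕ} (hn : 0 < n) (e : Fin n → E)
    (hloop : ∀ i : Fin n, t (e i) = s (e ⟨(i.val + 1) % n, Nat.mod_lt _ hn⟩))
    (hsimple : Function.Injective fun i : Fin n => s (e i)) :
    IsMinimalCycle s t (∑ i, Finsupp.single (e i) 1) := by
  classical
  haveI : NeZero n := ⟨hn.ne'⟩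
  have hloop' : ∀ i : Fin n, t (e i) = s (e (i + 1)) := by
    intro i
    have : (i + 1 : Fin n) = ⟨(i.val + 1) % n, Nat.mod_lt _ hn⟩ := by
      ext
      simp [Fin.add_def, Nat.add_mod]
    rw [this]
    exact hloop i
  set c : E →₀ ℕ := ∑ i, Finsupp.single (e i) 1 with hc
  have hce : ∀ j : Fin n, c (e j) = 1 := by
    intro j
    rw [hc, sum_single_apply']
    rw [Finset.sum_eq_single j (fun i _ hij => by
        have hne : e i ≠ e j := fun h => hij (hsimple (by simp [h]))
        simp [hne]) (by simp)]
    simp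
  have hmem : c ∈ graphH1 s t := by
    show Finsupp.mapDomain s c = Finsupp.mapDomain t c
    rw [hc, mapDomain_sum_single', mapDomain_sum_single']
    simp only [hloop']
    exact (Fintype.sum_equiv (Equiv.addRight (1 : Fin n)) _ _ (fun i => rfl)).symm
  refine ⟨hmem, ?_, ?_⟩
  · intro h
    have := hce ⟨0, hn⟩
    rw [h] at this
    simp at this
  · intro y hy ⟨a, _, hya⟩
    set g : Fin n → ℕ := fun i => y (e i) with hg
    have hyg : ∀ j : Fin n, g j + a (e j) = 1 := by
      intro j
      have := congrArg (fun f : E →₀ ℕ => f (e j)) hya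
      simpa [hce j] using this
    have hy0 : ∀ x : E, (∀ j : Fin n, e j ≠ x) → y x = 0 := by
      intro x hx
      have hcx : c x = 0 := by
        rw [hc, sum_single_apply']
        exact Finset.sum_eq_zero (fun i _ => by simp [hx i])
      have := congrArg (fun f : E →₀ ℕ => f x) hya
      simp only [Finsupp.add_apply, hcx] at this
      omega
    have hysum : y = ∑ i, Finsupp.single (e i) (g i) := by
      ext x
      rw [sum_single_apply']
      by_cases h : ∃ j, e j = x
      · obtain ⟨j, rfl⟩ := h
        rw [Finset.sum_eq_single j (fun i _ hij => by
            have hne : e i ≠ e j := fun h => hij (hsimple (by simp [h]))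
            simp [hne]) (by simp)]
        simp [hg]
      · push_neg at h
        rw [hy0 x h]
        exact (Finset.sum_eq_zero (fun i _ => by simp [h i])).symm
    have hrec : ∀ j : Fin n, g (j + 1) = g j := by
      intro j
      have hy' : Finsupp.mapDomain s y = Finsupp.mapDomain t y := hy
      rw [hysum, mapDomain_sum_single', mapDomain_sum_single'] at hy'
      have heq : (∑ i, if s (e i) = s (e (j + 1)) then g i else 0)
          = ∑ i, if t (e i) = s (e (j + 1)) then g i else 0 := by
        rw [← sum_single_apply', ← sum_single_apply', hy']
      have hA : (∑ i, if s (e i) = s (e (j + 1)) then g i else 0) = g (j + 1) := by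
        rw [Finset.sum_eq_single (j + 1) (fun i _ hij => by
            have hne : s (e i) ≠ s (e (j + 1)) := fun h => hij (hsimple h)
            simp [hne]) (by simp)]
        simp
      have hB : (∑ i, if t (e i) = s (e (j + 1)) then g i else 0) = g j := by
        rw [Finset.sum_eq_single j (fun i _ hij => by
            have hne : s (e (i + 1)) ≠ s (e (j + 1)) := fun h => by
              have := hsimple h
              exact hij (by simpa using add_right_cancel (this : i + 1 = j + 1))
            rw [hloop' i]
            simp [hne]) (by simp)]
        simp [hloop' j]
      rw [hA, hB] at heq
      exact heq
    open Fin.NatCast in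
    have hconst : ∀ j : Fin n, g j = g 0 := by
      have key : ∀ k : ℕ, g (k : Fin n) = g 0 := by
        intro k
        induction k with
        | zero => simp
        | succ m ih => rw [Nat.cast_add_one, hrec, ih]
      intro j
      have := key j.val
      rwa [Fin.cast_val_eq_self] at this
    have hg0 : g 0 ≤ 1 := le_of_add_le_left (le_of_eq (hyg 0))
    interval_cases h0 : g 0
    · right
      rw [hysum]
      exact Finset.sum_eq_zero (fun i _ => by rw [hconst i, Finsupp.single_zero])
    · left
      rw [hysum, hc]
      exact Finset.sum_congr rfl (fun i _ => by rw [hconst i])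
end

section
/- For every minimal element c of H₁(G, ℕ) of a graph G, there exists a simple loop γ in G whose associated 1-chain equals c, i.e. [γ] = c. -/
open Finsupp in
private lemma exists_next_edge {E V : Type*} (s t : E → V) {c : E →₀ ℕ}
    (hc : Finsupp.mapDomain s c = Finsupp.mapDomain t c) {e : E} (he : e ∈ c.support) :
    ∃ e' ∈ c.support, s e' = t e := by
  have key : mapDomain s c (t e) ≠ 0 := by
    rw [hc]
    have h1 : mapDomain t c (t e)
        = ∑ a ∈ c.support, (single (t a) (c a) : V →₀ ℕ) (t e) := by
      rw [mapDomain, Finsupp.sum_apply, Finsupp.sum]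
    rw [h1]
    have h2 : (single (t e) (c e) : V →₀ ℕ) (t e)
        ≤ ∑ a ∈ c.support, (single (t a) (c a) : V →₀ ℕ) (t e) :=
      Finset.single_le_sum (f := fun a => (single (t a) (c a) : V →₀ ℕ) (t e))
        (fun a _ => Nat.zero_le _) he
    rw [single_eq_same] at h2
    have hce : c e ≠ 0 := Finsupp.mem_support_iff.mp he
    omega
  rw [mapDomain, Finsupp.sum_apply, Finsupp.sum] at key
  obtain ⟨a, ha, hne⟩ := Finset.exists_ne_zero_of_sum_ne_zero key
  refine ⟨a, ha, ?_⟩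
  by_contra hsa
  exact hne (Finsupp.single_eq_of_ne' hsa)

/-- For every minimal element `c` of `H₁(G,ℕ)` there is a simple loop `γ` in `G`
— edges `e : Fin n → E` with `n ≥ 1`, `t (e i) = s (e (i+1))` (indices mod `n`), and the
vertices `s (e i)` pairwise distinct — whose associated 1-chain `∑ i, single (e i) 1`
equals `c`. -/
theorem minimal_cycle_is_chain_of_simple_loop
    {E V : Type*} (s t : E → V) (c : E →₀ ℕ) (hc : IsMinimalCycle s t c) :
    ∃ (n : ℕ) (hn : 0 < n) (e : Fin n → E),
      (∀ i : Fin n, t (e i) = s (e ⟨(i.val + 1) % n, Nat.mod_lt _ hn⟩)) ∧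
      (Function.Injective fun i : Fin n => s (e i)) ∧
      (∑ i, Finsupp.single (e i) 1) = c := by
  classical
  obtain ⟨hcH1, hc0, hmin⟩ := hc
  obtain ⟨e0, he0⟩ := Finsupp.support_nonempty_iff.mpr hc0
  have hnext : ∀ e : E, ∃ e', e ∈ c.support → e' ∈ c.support ∧ s e' = t e := by
    intro e
    by_cases he : e ∈ c.support
    · obtain ⟨e', h1, h2⟩ := exists_next_edge s t hcH1 he
      exact ⟨e', fun _ => ⟨h1, h2⟩⟩
    · exact ⟨e0, fun h => absurd h he⟩
  choose f hf using hnext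
  set g : ℕ → E := fun k => f^[k] e0 with hg
  have hgsupp : ∀ k, g k ∈ c.support := by
    intro k
    induction k with
    | zero => exact he0
    | succ k ih =>
      have : g (k+1) = f (g k) := by
        simp only [hg, Function.iterate_succ', Function.comp_apply]
      rw [this]
      exact (hf _ ih).1
  have hgstep : ∀ k, s (g (k+1)) = t (g k) := by
    intro k
    have : g (k+1) = f (g k) := by
      simp only [hg, Function.iterate_succ', Function.comp_apply]
    rw [this]
    exact (hf _ (hgsupp k)).2
  -- find the first repetition among source vertices
  have hfin : (Set.range fun k => s (g k)).Finite :=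
    Set.Finite.subset ((c.support.finite_toSet).image s)
      (by rintro _ ⟨k, rfl⟩; exact ⟨g k, hgsupp k, rfl⟩)
  have hnotinj : ¬ Function.Injective fun k => s (g k) := by
    intro hinj
    exact Set.infinite_range_of_injective hinj hfin
  obtain ⟨a, b, hab, hne⟩ := Function.not_injective_iff.mp hnotinj
  have hexj : ∃ j, 0 < j ∧ ∃ i, i < j ∧ s (g i) = s (g j) := by
    rcases Nat.lt_or_ge a b with h | h
    · exact ⟨b, by omega, a, h, hab⟩
    · have hba : b < a := lt_of_le_of_ne h (Ne.symm hne)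
      exact ⟨a, by omega, b, hba, hab.symm⟩
  have hjpos := (Nat.find_spec hexj).1
  obtain ⟨i, hij, hsij⟩ := (Nat.find_spec hexj).2
  set j := Nat.find hexj with hjdef
  have hjmin : ∀ j' < j, ¬(0 < j' ∧ ∃ i', i' < j' ∧ s (g i') = s (g j')) :=
    fun j' h => Nat.find_min hexj h
  -- distinctness in the window [i, j)
  have hdist : ∀ a b : ℕ, i ≤ a → a < b → b < j → s (g a) ≠ s (g b) := by
    intro a b _ hab hbj heq
    exact hjmin b hbj ⟨by omega, a, hab, heq⟩
  obtain ⟨m, hm⟩ : ∃ m, j - i = m + 1 := ⟨j - i - 1, by omega⟩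
  have hij' : i + (m + 1) = j := by omega
  set e : Fin (m+1) → E := fun k => g (i + k.val) with he
  -- loop property
  have hloop : ∀ k : Fin (m+1), t (e k) = s (e ⟨(k.val + 1) % (m+1), Nat.mod_lt _ (Nat.succ_pos m)⟩) := by
    intro k
    rcases Nat.lt_or_ge (k.val + 1) (m+1) with hk | hk
    · have hmod : (k.val + 1) % (m+1) = k.val + 1 := Nat.mod_eq_of_lt hk
      simp only [he, hmod]
      rw [← hgstep (i + k.val)]
      congr 1
    · have hkm : k.val = m := by omega
      have hmod : (k.val + 1) % (m+1) = 0 := by rw [hkm]; exact Nat.mod_self (m+1)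
      simp only [he, hmod]
      have h1 : i + k.val + 1 = j := by omega
      have h2 : t (g (i + k.val)) = s (g j) := by rw [← h1]; exact (hgstep _).symm
      exact h2.trans hsij.symm
  -- injectivity of sources
  have hsinj : Function.Injective fun k : Fin (m+1) => s (e k) := by
    intro k l hkl
    by_contra hne'
    rcases Nat.lt_or_ge k.val l.val with h | h
    · exact hdist (i + k.val) (i + l.val) (by omega) (by omega) (by omega) hkl
    · have h' : l.val < k.val := by
        rcases Nat.lt_or_ge l.val k.val with h' | h'
        · exact h'
        · exact absurd (Fin.ext (by omega)) hne'
      exact hdist (i + l.val) (i + k.val) (by omega) (by omega) (by omega) hkl.symm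
  have heinj : Function.Injective e := fun k l h => hsinj (congrArg s h)
  set chain : E →₀ ℕ := ∑ k : Fin (m+1), Finsupp.single (e k) 1 with hchain
  have hchain_apply : ∀ k : Fin (m+1), chain (e k) = 1 := by
    intro k
    rw [hchain, Finsupp.finset_sum_apply]
    rw [Finset.sum_eq_single_of_mem k (Finset.mem_univ k)]
    · simp
    · intro l _ hlk
      exact Finsupp.single_eq_of_ne' (fun h => hlk (heinj h))
  have hle : chain ≤ c := by
    rw [Finsupp.le_def]
    intro x
    by_cases hx : ∃ k, e k = x
    · obtain ⟨k, rfl⟩ := hx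
      rw [hchain_apply k]
      exact Nat.one_le_iff_ne_zero.mpr (Finsupp.mem_support_iff.mp (hgsupp (i + k.val)))
    · have hz : chain x = 0 := by
        rw [hchain, Finsupp.finset_sum_apply]
        apply Finset.sum_eq_zero
        intro l _
        exact Finsupp.single_eq_of_ne' (fun h => hx ⟨l, h⟩)
      omega
  have hmap : ∀ (u : E → V), Finsupp.mapDomain u chain
      = ∑ k : Fin (m+1), Finsupp.single (u (e k)) 1 := by
    intro u
    rw [hchain, Finsupp.mapDomain_finset_sum]
    simp only [Finsupp.mapDomain_single]
  have hrot : ∀ k : Fin (m+1),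
      (⟨(k.val + 1) % (m+1), Nat.mod_lt _ (Nat.succ_pos m)⟩ : Fin (m+1)) = k + 1 := by
    intro k
    apply Fin.ext
    simp [Fin.add_def, Nat.add_mod]
  have hchainH1 : chain ∈ graphH1 s t := by
    show Finsupp.mapDomain s chain = Finsupp.mapDomain t chain
    rw [hmap s, hmap t]
    have : ∀ k : Fin (m+1), Finsupp.single (t (e k)) (1:ℕ) = Finsupp.single (s (e (k+1))) 1 := by
      intro k
      rw [hloop k, hrot k]
    rw [Finset.sum_congr rfl (fun k _ => this k)]
    exact (Equiv.sum_comp (Equiv.addRight (1 : Fin (m+1))) (fun k => Finsupp.single (s (e k)) 1)).symm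
  have hadd : chain + (c - chain) = c := add_tsub_cancel_of_le hle
  have haH1 : c - chain ∈ graphH1 s t := by
    show Finsupp.mapDomain s (c - chain) = Finsupp.mapDomain t (c - chain)
    have h1 := congrArg (Finsupp.mapDomain s) hadd
    have h2 := congrArg (Finsupp.mapDomain t) hadd
    rw [Finsupp.mapDomain_add] at h1 h2
    have hch : Finsupp.mapDomain s chain = Finsupp.mapDomain t chain := hchainH1
    have key : Finsupp.mapDomain s chain + Finsupp.mapDomain s (c - chain)
        = Finsupp.mapDomain s chain + Finsupp.mapDomain t (c - chain) := by
      calc Finsupp.mapDomain s chain + Finsupp.mapDomain s (c - chain)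
          = Finsupp.mapDomain s c := h1
        _ = Finsupp.mapDomain t c := hcH1
        _ = Finsupp.mapDomain t chain + Finsupp.mapDomain t (c - chain) := h2.symm
        _ = Finsupp.mapDomain s chain + Finsupp.mapDomain t (c - chain) := by rw [hch]
    exact add_left_cancel key
  rcases hmin chain hchainH1 ⟨c - chain, haH1, hadd⟩ with h | h
  · exact ⟨m + 1, Nat.succ_pos m, e, hloop, hsinj, h⟩
  · exfalso
    have := hchain_apply 0
    rw [h] at this
    simp at this
end

section
/- For any graph G, the assignment γ ↦ [γ] induces a bijection between the set of homology classes of simple loops in G (simple loops modulo the relation of being homologous) and the set of minimal elements of H₁(G, ℕ). -/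
/-- A simple loop in the graph `G = (E,V,s,t)`: edges `e : Fin n → E` with `n ≥ 1` such that
`t (e i) = s (e (i+1))` (indices mod `n`) and the vertices `s (e i)` are pairwise distinct. -/
structure SimpleLoop {E V : Type*} (s t : E → V) where
  n : ℕ
  npos : 0 < n
  edge : Fin n → E
  is_loop : ∀ i : Fin n, t (edge i) = s (edge ⟨(i.val + 1) % n, Nat.mod_lt _ npos⟩)
  simple : Function.Injective fun i : Fin n => s (edge i)

/-- The 1-chain `[γ] = ∑ i, single (e i) 1` associated to a simple loop. -/
noncomputable def SimpleLoop.chain {E V : Type*} {s t : E → V} (γ : SimpleLoop s t) :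
    E →₀ ℕ :=
  ∑ i, Finsupp.single (γ.edge i) 1

/-- Two (simple) loops are homologous when their associated 1-chains are equal. -/
def SimpleLoop.Homologous {E V : Type*} {s t : E → V} (γ δ : SimpleLoop s t) : Prop :=
  γ.chain = δ.chain



open Classical in
lemma mapDomain_apply_eq_sum {E V : Type*} (f : E → V) (x : E →₀ ℕ) (v : V) :
    Finsupp.mapDomain f x v = ∑ e ∈ x.support, if f e = v then x e else 0 := by
  classical
  rw [Finsupp.mapDomain, Finsupp.sum_apply]
  rw [Finsupp.sum]
  apply Finset.sum_congr rfl
  intro e _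
  simp [Finsupp.single_apply]

lemma mapDomain_sum_single {E V : Type*} (f : E → V) {n : ℕ} (e : Fin n → E) (c : Fin n → ℕ) :
    Finsupp.mapDomain f (∑ i, Finsupp.single (e i) (c i)) =
      ∑ i, Finsupp.single (f (e i)) (c i) := by
  rw [Finsupp.mapDomain_finset_sum]
  simp [Finsupp.mapDomain_single]

lemma sum_single_apply_inj {V : Type*} {n : ℕ} (h : Fin n → V) (c : Fin n → ℕ)
    (hinj : Function.Injective h) (i₀ : Fin n) :
    (∑ i, Finsupp.single (h i) (c i)) (h i₀) = c i₀ := by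
  classical
  rw [Finsupp.finset_sum_apply, Finset.sum_eq_single i₀]
  · simp
  · intro b _ hb
    rw [Finsupp.single_apply, if_neg (fun hbe => hb (hinj hbe))]
  · simp

lemma sum_single_apply_notin {V : Type*} {n : ℕ} (h : Fin n → V) (c : Fin n → ℕ) (v : V)
    (hv : ∀ i, h i ≠ v) :
    (∑ i, Finsupp.single (h i) (c i)) v = 0 := by
  classical
  rw [Finsupp.finset_sum_apply]
  exact Finset.sum_eq_zero fun i _ => by simp [Finsupp.single_apply, hv i]

/-- the explicit successor mk equals `i + 1` in `Fin n`. -/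
lemma fin_mk_succ {n : ℕ} [NeZero n] (i : Fin n) :
    (⟨(i.val + 1) % n, Nat.mod_lt _ (Nat.pos_of_ne_zero (NeZero.ne n))⟩ : Fin n) = i + 1 := by
  have : ((⟨(i.val + 1) % n, Nat.mod_lt _ (Nat.pos_of_ne_zero (NeZero.ne n))⟩ : Fin n) : ℕ)
      = (i.val + 1) % n := rfl
  ext
  rw [this, Fin.val_add, Fin.val_one']
  conv_lhs => rw [Nat.add_mod, Nat.mod_eq_of_lt i.isLt]

open Fin.NatCast in
/-- a function on `Fin n` invariant under `+1` is constant. -/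
lemma fin_succ_invariant_const {n : ℕ} [NeZero n] (c : Fin n → ℕ)
    (hc : ∀ i, c (i + 1) = c i) (i j : Fin n) : c i = c j := by
  have key : ∀ m : ℕ, ∀ a : Fin n, c (a + (m : Fin n)) = c a := by
    intro m
    induction m with
    | zero => simp
    | succ k ih =>
      intro a
      have : ((k + 1 : ℕ) : Fin n) = (k : Fin n) + 1 := by push_cast; ring
      rw [this, ← add_assoc, hc, ih]
  have := key (i - j).val j
  rw [Fin.cast_val_eq_self, add_comm, sub_add_cancel] at this
  exact this

/-- representation of a finsupp supported on the image of an injective map. -/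
lemma rep_of_support_subset {E : Type*} {n : ℕ} (g : Fin n → E) (hg : Function.Injective g)
    (y : E →₀ ℕ) (hy : ∀ e, y e ≠ 0 → ∃ i, g i = e) :
    y = ∑ i, Finsupp.single (g i) (y (g i)) := by
  classical
  ext e
  by_cases he : ∃ i, g i = e
  · obtain ⟨i, rfl⟩ := he
    rw [sum_single_apply_inj g _ hg]
  · push_neg at he
    rw [sum_single_apply_notin g _ e he]
    by_contra h
    obtain ⟨i, hi⟩ := hy e h
    exact he i hi

namespace SimpleLoop

variable {E V : Type*} {s t : E → V} (γ : SimpleLoop s t)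

instance : NeZero γ.n := ⟨γ.npos.ne'⟩

lemma edge_inj : Function.Injective γ.edge :=
  fun a b h => γ.simple (by simp [h])

lemma is_loop' (i : Fin γ.n) : t (γ.edge i) = s (γ.edge (i + 1)) := by
  rw [γ.is_loop i, fin_mk_succ]

lemma chain_apply_edge (i : Fin γ.n) : γ.chain (γ.edge i) = 1 :=
  sum_single_apply_inj γ.edge (fun _ => 1) γ.edge_inj i

lemma chain_apply_notin (e : E) (he : ∀ i, γ.edge i ≠ e) : γ.chain e = 0 :=
  sum_single_apply_notin γ.edge (fun _ => 1) e he

lemma chain_mem : γ.chain ∈ graphH1 s t := by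
  show Finsupp.mapDomain s γ.chain = Finsupp.mapDomain t γ.chain
  rw [SimpleLoop.chain, mapDomain_sum_single, mapDomain_sum_single]
  have : ∀ i : Fin γ.n, Finsupp.single (t (γ.edge i)) (1:ℕ)
      = Finsupp.single (s (γ.edge (i + 1))) 1 := fun i => by rw [γ.is_loop' i]
  rw [Finset.sum_congr rfl (fun i _ => this i)]
  exact (Equiv.sum_comp (Equiv.addRight (1 : Fin γ.n))
    (fun j => Finsupp.single (s (γ.edge j)) (1:ℕ))).symm

lemma chain_ne_zero : γ.chain ≠ 0 := fun h => by
  have := γ.chain_apply_edge ⟨0, γ.npos⟩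
  rw [h] at this
  simp at this

/-- Any cycle `y ≤ [γ]` is `[γ]` or `0`. -/
lemma chain_minimal : IsMinimalCycle s t γ.chain := by
  refine ⟨γ.chain_mem, γ.chain_ne_zero, ?_⟩
  rintro y hy ⟨a, _, hya⟩
  -- y is supported on the edges of γ
  have hle : ∀ e, y e ≤ γ.chain e := fun e => by
    have : y e + a e = γ.chain e := by rw [← Finsupp.add_apply, hya]
    omega
  have hsupp : ∀ e, y e ≠ 0 → ∃ i, γ.edge i = e := by
    intro e he
    by_contra hne
    push_neg at hne
    have h := hle e
    rw [γ.chain_apply_notin e hne] at h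
    exact he (Nat.le_zero.mp h)
  set c : Fin γ.n → ℕ := fun i => y (γ.edge i) with hc
  have hrep : y = ∑ i, Finsupp.single (γ.edge i) (c i) :=
    rep_of_support_subset γ.edge γ.edge_inj y hsupp
  -- cycle condition forces c (i+1) = c i
  have hconst : ∀ i : Fin γ.n, c (i + 1) = c i := by
    intro i
    have hy' : Finsupp.mapDomain s y = Finsupp.mapDomain t y := hy
    rw [hrep, mapDomain_sum_single, mapDomain_sum_single] at hy'
    have h1 : (∑ j, Finsupp.single (s (γ.edge j)) (c j)) (s (γ.edge (i+1))) = c (i+1) :=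
      sum_single_apply_inj _ c γ.simple (i+1)
    have ht' : ∀ j : Fin γ.n, Finsupp.single (t (γ.edge j)) (c j)
        = Finsupp.single ((fun k => s (γ.edge k)) ((Equiv.addRight (1 : Fin γ.n)) j)) (c j) :=
      fun j => by rw [Equiv.coe_addRight, γ.is_loop' j]
    have h2 : (∑ j, Finsupp.single (t (γ.edge j)) (c j)) (s (γ.edge (i+1))) = c i := by
      rw [Finset.sum_congr rfl (fun j _ => ht' j)]
      have := sum_single_apply_inj ((fun k => s (γ.edge k)) ∘ (Equiv.addRight (1 : Fin γ.n)))
        c (γ.simple.comp (Equiv.addRight (1 : Fin γ.n)).injective) i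
      simpa using this
    rw [← h1, ← h2, hy']
  -- hence c is constant
  by_cases h0 : c ⟨0, γ.npos⟩ = 0
  · right
    rw [hrep]
    have : ∀ i : Fin γ.n, c i = 0 := fun i =>
      (fin_succ_invariant_const c hconst i ⟨0, γ.npos⟩).trans h0
    simp [this]
  · left
    have hone : ∀ i : Fin γ.n, c i = 1 := by
      intro i
      have h1 : c i = c ⟨0, γ.npos⟩ := fin_succ_invariant_const c hconst i ⟨0, γ.npos⟩
      have h2 : c i ≤ 1 := by
        have := hle (γ.edge i)
        rwa [γ.chain_apply_edge i] at this
      omega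
    rw [hrep, SimpleLoop.chain]
    exact Finset.sum_congr rfl fun i _ => by rw [hone i]

end SimpleLoop

/-- an infinite walk inside a set closed under "has a successor". -/
lemma exists_infinite_walk {E : Type*} (S : Set E) (R : E → E → Prop)
    (e₀ : E) (he₀ : e₀ ∈ S) (h : ∀ e ∈ S, ∃ e' ∈ S, R e e') :
    ∃ f : ℕ → E, f 0 = e₀ ∧ (∀ k, f k ∈ S) ∧ ∀ k, R (f k) (f (k + 1)) := by
  have hnext : ∀ e : S, ∃ e' : S, R e e' := by
    rintro ⟨e, he⟩
    obtain ⟨e', he', hR⟩ := h e he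
    exact ⟨⟨e', he'⟩, hR⟩
  let g : ℕ → S := fun k => Nat.rec ⟨e₀, he₀⟩ (fun _ prev => (hnext prev).choose) k
  refine ⟨fun k => Subtype.val (g k), rfl, fun k => ?_, fun k => ?_⟩
  · exact (g k).2
  · exact (hnext (g k)).choose_spec

/-- in a cycle, every edge of the support has a successor edge in the support. -/
lemma exists_succ_edge {E V : Type*} (s t : E → V) (x : E →₀ ℕ)
    (hx : Finsupp.mapDomain s x = Finsupp.mapDomain t x)
    (e : E) (he : e ∈ x.support) : ∃ e' ∈ x.support, s e' = t e := by
  classical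
  have h1 : x e ≤ Finsupp.mapDomain t x (t e) := by
    rw [mapDomain_apply_eq_sum]
    calc x e = if t e = t e then x e else 0 := by simp
    _ ≤ _ := Finset.single_le_sum (f := fun e' => if t e' = t e then x e' else 0)
        (fun _ _ => by positivity) he
  rw [← hx, mapDomain_apply_eq_sum] at h1
  have hxe : 0 < x e := Nat.pos_of_ne_zero (Finsupp.mem_support_iff.mp he)
  have : ∃ e' ∈ x.support, (if s e' = t e then x e' else 0) ≠ 0 := by
    by_contra hc
    push_neg at hc
    rw [Finset.sum_eq_zero hc] at h1
    omega
  obtain ⟨e', he', hne⟩ := this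
  refine ⟨e', he', ?_⟩
  by_contra hs
  rw [if_neg hs] at hne
  exact hne rfl

/-- from any nonzero cycle one can extract a simple loop with edges in the support. -/
lemma exists_simple_loop {E V : Type*} (s t : E → V) (x : E →₀ ℕ)
    (hx : Finsupp.mapDomain s x = Finsupp.mapDomain t x) (hx0 : x ≠ 0) :
    ∃ γ : SimpleLoop s t, ∀ i, γ.edge i ∈ x.support := by
  classical
  obtain ⟨e₀, he₀⟩ := Finsupp.support_nonempty_iff.mpr hx0
  obtain ⟨f, -, hfS, hfR⟩ := exists_infinite_walk (↑x.support : Set E)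
    (fun e e' => s e' = t e) e₀ he₀
    (fun e he => by
      obtain ⟨e', h1, h2⟩ := exists_succ_edge s t x hx e he
      exact ⟨e', h1, h2⟩)
  set v : ℕ → V := fun k => s (f k) with hv
  -- v takes values in a finite set, so it repeats
  have hrep : ∃ i j, i < j ∧ v i = v j := by
    have : ∀ k, v k ∈ x.support.image s := fun k =>
      Finset.mem_image_of_mem s (hfS k)
    obtain ⟨i, j, hij, hv⟩ := Finite.exists_ne_map_eq_of_infinite
      (fun k : ℕ => (⟨v k, this k⟩ : {w // w ∈ x.support.image s}))
    rcases Nat.lt_or_ge i j with h | h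
    · exact ⟨i, j, h, congrArg Subtype.val hv⟩
    · exact ⟨j, i, lt_of_le_of_ne h (Ne.symm hij), (congrArg Subtype.val hv).symm⟩
  -- minimal second index of a repetition
  let P : ℕ → Prop := fun j => ∃ i, i < j ∧ v i = v j
  have hP : ∃ j, P j := by obtain ⟨i, j, h1, h2⟩ := hrep; exact ⟨j, i, h1, h2⟩
  haveI : DecidablePred P := fun _ => Classical.dec _
  let j₀ := Nat.find hP
  obtain ⟨i₀, hi₀, hvij⟩ : P j₀ := Nat.find_spec hP
  set n := j₀ - i₀ with hn
  have npos : 0 < n := by omega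
  -- vertices v (i₀ + k), k < n, are pairwise distinct
  have hinj : ∀ a b : ℕ, a < n → b < n → v (i₀ + a) = v (i₀ + b) → a = b := by
    intro a b ha hb hab
    by_contra hne
    rcases Nat.lt_or_ge a b with h | h
    · have : P (i₀ + b) := ⟨i₀ + a, by omega, hab⟩
      exact absurd (Nat.find_le this) (by omega)
    · have h' : a > b := by omega
      have : P (i₀ + a) := ⟨i₀ + b, by omega, hab.symm⟩
      exact absurd (Nat.find_le this) (by omega)
  refine ⟨⟨n, npos, fun k => f (i₀ + k.val), ?_, ?_⟩, fun i => hfS _⟩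
  · intro i
    show t (f (i₀ + i.val)) = s (f (i₀ + (i.val + 1) % n))
    rcases Nat.lt_or_ge (i.val + 1) n with h | h
    · rw [Nat.mod_eq_of_lt h, ← Nat.add_assoc]
      exact (hfR (i₀ + i.val)).symm
    · have hn1 : i.val + 1 = n := by omega
      rw [hn1, Nat.mod_self]
      have h1 : t (f (i₀ + i.val)) = s (f (i₀ + i.val + 1)) := (hfR _).symm
      have h2 : i₀ + i.val + 1 = j₀ := by omega
      rw [h1, h2, Nat.add_zero]
      exact hvij.symm
  · intro a b hab
    exact Fin.ext (hinj a.val b.val a.isLt b.isLt hab)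

lemma minimal_eq_chain {E V : Type*} (s t : E → V) (x : E →₀ ℕ)
    (hmin : IsMinimalCycle s t x) : ∃ γ : SimpleLoop s t, γ.chain = x := by
  obtain ⟨hx, hx0, hm⟩ := hmin
  obtain ⟨γ, hγ⟩ := exists_simple_loop s t x hx hx0
  refine ⟨γ, ?_⟩
  have hle : γ.chain ≤ x := by
    rw [Finsupp.le_def]
    intro e
    by_cases he : ∃ i, γ.edge i = e
    · obtain ⟨i, rfl⟩ := he
      rw [γ.chain_apply_edge i]
      exact Nat.pos_of_ne_zero (Finsupp.mem_support_iff.mp (hγ i))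
    · push_neg at he
      rw [γ.chain_apply_notin e he]
      exact Nat.zero_le _
  have hadd : γ.chain + (x - γ.chain) = x := add_tsub_cancel_of_le hle
  have hamem : (x - γ.chain) ∈ graphH1 s t := by
    show Finsupp.mapDomain s _ = Finsupp.mapDomain t _
    have h1 : Finsupp.mapDomain s γ.chain + Finsupp.mapDomain s (x - γ.chain)
        = Finsupp.mapDomain t γ.chain + Finsupp.mapDomain t (x - γ.chain) := by
      rw [← Finsupp.mapDomain_add, ← Finsupp.mapDomain_add, hadd]
      exact hx
    have h2 : Finsupp.mapDomain s γ.chain = Finsupp.mapDomain t γ.chain := γ.chain_mem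
    rw [h2] at h1
    exact add_left_cancel h1
  rcases hm γ.chain γ.chain_mem ⟨x - γ.chain, hamem, hadd⟩ with h | h
  · exact h
  · exact absurd h γ.chain_ne_zero

/-- The assignment `γ ↦ [γ]` induces a bijection between homology classes of
simple loops in `G` and minimal elements of `H₁(G,ℕ)`. -/
theorem simple_loops_mod_homologous_equiv_minimal_cycles
    {E V : Type*} (s t : E → V) :
    ∃ F : Quot (SimpleLoop.Homologous (s := s) (t := t)) →
        {x : E →₀ ℕ // IsMinimalCycle s t x},
      (∀ γ : SimpleLoop s t, (F (Quot.mk _ γ) : E →₀ ℕ) = γ.chain) ∧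
      Function.Bijective F := by
  refine ⟨Quot.lift (fun γ => ⟨γ.chain, γ.chain_minimal⟩)
    (fun a b h => Subtype.ext h), fun γ => rfl, ?_, ?_⟩
  · intro q1 q2 h
    induction q1 using Quot.ind with | _ a =>
    induction q2 using Quot.ind with | _ b =>
    exact Quot.sound (congrArg Subtype.val h)
  · rintro ⟨x, hmin⟩
    obtain ⟨γ, hγ⟩ := minimal_eq_chain s t x hmin
    exact ⟨Quot.mk _ γ, Subtype.ext hγ⟩
end

section
/- Let γ be a simple loop in a graph G, given by edges e : Fin n → E. Then every loop δ homologous to γ is a cyclic rotation of γ: if δ is given by edges f : Fin m → E and [δ] = [γ], then m = n and there exists k such that f(i) = e(i + k) for all i, indices taken mod n. -/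
/-! Since `γ` is simple its edges are distinct, and equality of 1-chains is equality of edge
multisets, so `δ` runs through the edges of `γ`, each once: `f = e ∘ σ` for a bijection
`σ : Fin m ≃ Fin n`. Comparing `t (f i) = s (f (i + 1))` with `t (e (σ i)) = s (e (σ i + 1))`,
simplicity of `γ` forces `σ (i + 1) = σ i + 1`, so `σ` is the rotation `i ↦ σ 0 + i`. -/

open Function Finset Fin.NatCast

theorem Finsupp.toMultiset_sum_single_one {α E : Type*} (s : Finset α) (f : α → E) :
    Finsupp.toMultiset (∑ a ∈ s, Finsupp.single (f a) 1) = s.val.map f := by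
  rw [map_sum, ← Multiset.sum_map_singleton (s.val.map f), Multiset.map_map]
  simp only [Finsupp.toMultiset_single, one_nsmul]
  rfl

theorem Fintype.exists_equiv_of_map_univ_eq {α β E : Type*} [Fintype α] [Fintype β]
    {f : α → E} {e : β → E} (he : Injective e)
    (h : (univ : Finset α).val.map f = (univ : Finset β).val.map e) :
    ∃ σ : α ≃ β, ∀ a, f a = e (σ a) := by
  have hf : Injective f := by
    have hnodup : ((univ : Finset α).val.map f).Nodup := h ▸ univ.nodup.map he
    exact fun a a' haa' => Multiset.inj_on_of_nodup_map hnodup a (mem_univ _) a' (mem_univ _) haa'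
  have hcard : Fintype.card α = Fintype.card β := by
    simpa using congrArg Multiset.card h
  have hrange : ∀ a, ∃ b, e b = f a := fun a => by
    simpa [h] using Multiset.mem_map_of_mem f (mem_univ a)
  choose σ hσ using hrange
  have hσ_inj : Injective σ := fun a a' haa' => hf (by rw [← hσ, ← hσ, haa'])
  exact ⟨Equiv.ofBijective σ ((Fintype.bijective_iff_injective_and_card σ).2 ⟨hσ_inj, hcard⟩),
    fun a => (hσ a).symm⟩

theorem Fin.mk_mod_eq_natCast {n : ℕ} [NeZero n] (a : ℕ) (h : a % n < n) :
    (⟨a % n, h⟩ : Fin n) = a :=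
  rfl

theorem Fin.apply_eq_apply_zero_add_of_map_add_one {m : ℕ} [NeZero m] {M : Type*}
    [AddMonoidWithOne M] {σ : Fin m → M} (hσ : ∀ i, σ (i + 1) = σ i + 1) (i : Fin m) :
    σ i = σ 0 + i.val := by
  have hcast : ∀ k : ℕ, σ (k : Fin m) = σ 0 + k := by
    intro k
    induction k with
    | zero => simp
    | succ k ih => rw [Nat.cast_succ, hσ, ih, Nat.cast_succ, add_assoc]
  simpa using hcast i.val

def IsLoop {E V : Type*} (s t : E → V) {n : ℕ} [NeZero n] (e : Fin n → E) : Prop :=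
  ∀ i, t (e i) = s (e (i + 1))

theorem IsLoop.map_add_one_of_eq_comp {E V : Type*} {s t : E → V} {m n : ℕ} [NeZero m] [NeZero n]
    {e : Fin n → E} {f : Fin m → E} {σ : Fin m → Fin n} (he : IsLoop s t e)
    (hsimple : Injective (s ∘ e)) (hf : IsLoop s t f) (hσ : ∀ i, f i = e (σ i)) (i : Fin m) :
    σ (i + 1) = σ i + 1 :=
  hsimple <| calc
    s (e (σ (i + 1))) = t (f i) := by rw [hf, hσ]
    _ = s (e (σ i + 1)) := by rw [hσ, he]

/-- Every loop homologous to a simple loop is a cyclic rotation of it.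
Let `γ` be a simple loop with edges `e : Fin n → E` and let `δ` be a loop with edges
`f : Fin m → E` whose associated 1-chain `∑ i, single (f i) 1` equals that of `γ`.
Then `m = n` and there is `k` with `f i = e ((i + k) mod n)` for all `i`. -/
theorem loop_homologous_to_simple_loop_is_rotation
    {E V : Type*} (s t : E → V)
    {n m : ℕ} (hn : 0 < n) (hm : 0 < m)
    (e : Fin n → E) (f : Fin m → E)
    -- γ is a loop
    (he : ∀ i : Fin n, t (e i) = s (e ⟨(i.val + 1) % n, Nat.mod_lt _ hn⟩))
    -- γ is simple
    (hsimple : Function.Injective fun i : Fin n => s (e i))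
    -- δ is a loop
    (hf : ∀ i : Fin m, t (f i) = s (f ⟨(i.val + 1) % m, Nat.mod_lt _ hm⟩))
    -- δ is homologous to γ
    (hchain : (∑ i, Finsupp.single (f i) 1 : E →₀ ℕ) = ∑ i, Finsupp.single (e i) 1) :
    m = n ∧ ∃ k : ℕ, ∀ i : Fin m, f i = e ⟨(i.val + k) % n, Nat.mod_lt _ hn⟩ := by
  have := NeZero.of_pos hn
  have := NeZero.of_pos hm
  have hγ : IsLoop s t e := fun i => by simpa [Fin.mk_mod_eq_natCast] using he i
  have hδ : IsLoop s t f := fun i => by simpa [Fin.mk_mod_eq_natCast] using hf i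
  obtain ⟨σ, hσ⟩ := Fintype.exists_equiv_of_map_univ_eq hsimple.of_comp
    (by simpa only [Finsupp.toMultiset_sum_single_one] using congrArg Finsupp.toMultiset hchain)
  have hrot := Fin.apply_eq_apply_zero_add_of_map_add_one (hγ.map_add_one_of_eq_comp hsimple hδ hσ)
  refine ⟨by simpa using Fintype.card_congr σ, (σ 0).val, fun i => ?_⟩
  rw [Fin.mk_mod_eq_natCast, Nat.cast_add, Fin.cast_val_eq_self, hσ, hrot, add_comm]
end

section
/- Let Q be the graph with two vertices u, v and four edges e₁, e₂ : u → v and e₃, e₄ : v → u. Then H₁(Q, ℕ) is not a free commutative monoid: there is no type S and no additive monoid isomorphism between H₁(Q, ℕ) and (S →₀ ℕ). (Its minimal elements are e₁+e₃, e₁+e₄, e₂+e₃, e₂+e₄, which satisfy the relation (e₁+e₃) + (e₂+e₄) = (e₁+e₄) + (e₂+e₃).) -/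
/-- Atoms of a free commutative monoid are the `single s 1`. -/
lemma free_atom_aux {S : Type*} (f : S →₀ ℕ) (h1 : f ≠ 0)
    (h2 : ∀ a b : S →₀ ℕ, a + b = f → a = 0 ∨ b = 0) :
    ∃ s, f = Finsupp.single s 1 := by
  obtain ⟨s, hs⟩ : ∃ s, f s ≠ 0 := by
    by_contra h
    push_neg at h
    exact h1 (Finsupp.ext fun a => h a)
  have hle : Finsupp.single s 1 ≤ f := by
    rw [Finsupp.single_le_iff]
    omega
  have := h2 (Finsupp.single s 1) (f - Finsupp.single s 1)
    (add_tsub_cancel_of_le hle)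
  rcases this with h | h
  · exact absurd h (by simp)
  · exact ⟨s, by rw [← add_tsub_cancel_of_le hle, h, add_zero]⟩

/-- No relation `a + d = b + c` among distinct atoms of a free commutative monoid. -/
lemma free_no_rel_aux {S : Type*} (a b c d : S →₀ ℕ)
    (ha : ∃ p, a = Finsupp.single p 1) (hb : ∃ p, b = Finsupp.single p 1)
    (hc : ∃ p, c = Finsupp.single p 1)
    (hab : a ≠ b) (hac : a ≠ c) (h : a + d = b + c) : False := by
  obtain ⟨p, rfl⟩ := ha
  obtain ⟨q, rfl⟩ := hb
  obtain ⟨r, rfl⟩ := hc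
  have hpq : p ≠ q := fun e => hab (by rw [e])
  have hpr : p ≠ r := fun e => hac (by rw [e])
  have := DFunLike.congr_fun h p
  simp [Finsupp.single_apply, hpq.symm, hpr.symm] at this

/-- Let `Q` be the graph with vertices `u = 0`, `v = 1` and four edges
`e₁, e₂ : u → v` and `e₃, e₄ : v → u` (edge set `Fin 4`, source map `![0,0,1,1]`, target map
`![1,1,0,0]`).  Then `H₁(Q,ℕ)` is not a free commutative monoid: there is no type `S` and no
additive monoid isomorphism `H₁(Q,ℕ) ≃+ (S →₀ ℕ)`. -/
theorem h1_of_Q_not_free :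
    ¬ ∃ S : Type u, Nonempty
      ((graphH1 (![0, 0, 1, 1] : Fin 4 → Fin 2) (![1, 1, 0, 0] : Fin 4 → Fin 2)) ≃+
        (S →₀ ℕ)) := by
  rintro ⟨S, ⟨e⟩⟩
  set M := graphH1 (![0, 0, 1, 1] : Fin 4 → Fin 2) (![1, 1, 0, 0] : Fin 4 → Fin 2) with hM
  -- membership criterion
  have hmem : ∀ c : Fin 4 →₀ ℕ, c ∈ M ↔ c 0 + c 1 = c 2 + c 3 := by
    intro c
    have hrepr : c = Finsupp.single 0 (c 0) + Finsupp.single 1 (c 1)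
        + Finsupp.single 2 (c 2) + Finsupp.single 3 (c 3) := by
      ext i
      fin_cases i <;> simp [Finsupp.single_apply]
    constructor
    · intro h
      have h' : Finsupp.mapDomain (![0, 0, 1, 1] : Fin 4 → Fin 2) c
          = Finsupp.mapDomain (![1, 1, 0, 0] : Fin 4 → Fin 2) c := h
      rw [hrepr] at h'
      simp only [Finsupp.mapDomain_add, Finsupp.mapDomain_single] at h'
      have := DFunLike.congr_fun h' 0
      simpa [Finsupp.single_apply] using this
    · intro h
      show Finsupp.mapDomain _ c = Finsupp.mapDomain _ c
      rw [hrepr]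
      simp only [Finsupp.mapDomain_add, Finsupp.mapDomain_single]
      ext j
      fin_cases j <;> simp [Finsupp.single_apply] <;> omega
  -- the four minimal cycles
  have hx : ∀ i j : Fin 4, (i = 0 ∨ i = 1) → (j = 2 ∨ j = 3) →
      (Finsupp.single i 1 + Finsupp.single j 1 : Fin 4 →₀ ℕ) ∈ M := by
    intro i j hi hj
    rw [hmem]
    rcases hi with rfl | rfl <;> rcases hj with rfl | rfl <;>
      simp [Finsupp.single_apply]
  let x : Fin 4 → Fin 4 → M := fun i j =>
    if h : (i = 0 ∨ i = 1) ∧ (j = 2 ∨ j = 3) then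
      ⟨Finsupp.single i 1 + Finsupp.single j 1, hx i j h.1 h.2⟩ else 0
  have hxval : ∀ i j (hi : i = 0 ∨ i = 1) (hj : j = 2 ∨ j = 3), (x i j : Fin 4 →₀ ℕ)
      = Finsupp.single i 1 + Finsupp.single j 1 := by
    intro i j hi hj
    simp only [x, dif_pos (And.intro hi hj)]
  -- atomicity in M
  have hatom : ∀ i j (hi : i = 0 ∨ i = 1) (hj : j = 2 ∨ j = 3), ∀ a b : M, a + b = x i j → a = 0 ∨ b = 0 := by
    intro i j hi hj a b hab
    have hab' : (a : Fin 4 →₀ ℕ) + (b : Fin 4 →₀ ℕ) = Finsupp.single i 1 + Finsupp.single j 1 := by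
      rw [← hxval i j hi hj]
      exact congrArg Subtype.val hab
    have ha := (hmem a).mp a.2
    have hb := (hmem b).mp b.2
    have key : ∀ k : Fin 4, (a : Fin 4 →₀ ℕ) k + (b : Fin 4 →₀ ℕ) k
        = (Finsupp.single i 1 : Fin 4 →₀ ℕ) k + (Finsupp.single j 1 : Fin 4 →₀ ℕ) k := by
      intro k
      have := DFunLike.congr_fun hab' k
      simpa using this
    have ext4 : ∀ f : Fin 4 →₀ ℕ, f 0 = 0 → f 1 = 0 → f 2 = 0 → f 3 = 0 → f = 0 := by
      intro f h0 h1 h2 h3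
      ext k
      fin_cases k <;> assumption
    have k0 := key 0; have k1 := key 1; have k2 := key 2; have k3 := key 3
    rcases hi with rfl | rfl <;> rcases hj with rfl | rfl <;>
      simp [Finsupp.single_apply] at k0 k1 k2 k3 <;>
    · rcases Nat.eq_zero_or_pos ((a : Fin 4 →₀ ℕ) 0 + (a : Fin 4 →₀ ℕ) 1) with h0 | h0
      · exact Or.inl (Subtype.ext (ext4 _ (by omega) (by omega) (by omega) (by omega)))
      · exact Or.inr (Subtype.ext (ext4 _ (by omega) (by omega) (by omega) (by omega)))
  -- distinctness
  have hne : ∀ i j i' j' (hi : i = 0 ∨ i = 1) (hj : j = 2 ∨ j = 3) (hi' : i' = 0 ∨ i' = 1) (hj' : j' = 2 ∨ j' = 3), (i ≠ i' ∨ j ≠ j') → x i j ≠ x i' j' := by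
    intro i j i' j' hi hj hi' hj' hne heq
    have h : (Finsupp.single i 1 + Finsupp.single j 1 : Fin 4 →₀ ℕ)
        = Finsupp.single i' 1 + Finsupp.single j' 1 := by
      rw [← hxval i j hi hj, ← hxval i' j' hi' hj', heq]
    have hr : ∀ p q : Fin 4, (p = 0 ∨ p = 1) → (q = 2 ∨ q = 3) → p ≠ q := by
      rintro p q (rfl | rfl) (rfl | rfl) <;> decide
    rcases hne with hne | hne
    · have key := DFunLike.congr_fun h i
      rw [Finsupp.add_apply, Finsupp.add_apply, Finsupp.single_eq_same,
        Finsupp.single_eq_of_ne' (hr i j hi hj).symm,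
        Finsupp.single_eq_of_ne' hne.symm,
        Finsupp.single_eq_of_ne' (hr i j' hi hj').symm] at key
      simp at key
    · have key := DFunLike.congr_fun h j
      rw [Finsupp.add_apply, Finsupp.add_apply, Finsupp.single_eq_same,
        Finsupp.single_eq_of_ne' (hr i j hi hj),
        Finsupp.single_eq_of_ne' (hr i' j hi' hj),
        Finsupp.single_eq_of_ne' hne.symm] at key
      simp at key
  have hnz : ∀ i j (hi : i = 0 ∨ i = 1) (hj : j = 2 ∨ j = 3), x i j ≠ (0 : M) := by
    intro i j hi hj heq
    have := DFunLike.congr_fun (congrArg Subtype.val heq) i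
    rw [hxval i j hi hj] at this
    simp [Finsupp.single_apply] at this
  -- the relation
  have hrel : x 0 2 + x 1 3 = x 0 3 + x 1 2 := by
    ext k
    show ((x 0 2 : Fin 4 →₀ ℕ) + (x 1 3 : Fin 4 →₀ ℕ)) k
        = ((x 0 3 : Fin 4 →₀ ℕ) + (x 1 2 : Fin 4 →₀ ℕ)) k
    rw [hxval 0 2 (Or.inl rfl) (Or.inl rfl), hxval 1 3 (Or.inr rfl) (Or.inr rfl),
      hxval 0 3 (Or.inl rfl) (Or.inr rfl), hxval 1 2 (Or.inr rfl) (Or.inl rfl)]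
    simp [Finsupp.single_apply]
    ring
  -- transport to the free monoid
  have hatomF : ∀ i j (hi : i = 0 ∨ i = 1) (hj : j = 2 ∨ j = 3), ∃ s, e (x i j) = Finsupp.single s 1 := by
    intro i j hi hj
    apply free_atom_aux
    · intro h
      exact hnz i j hi hj (e.injective (by rw [h, map_zero]))
    · intro a b hab
      have : e.symm a + e.symm b = x i j := by
        rw [← map_add]
        exact e.injective (by simp [hab])
      rcases hatom i j hi hj _ _ this with h | h
      · left
        have := congrArg e h
        simpa using this
      · right
        have := congrArg e h
        simpa using this
  refine free_no_rel_aux (e (x 0 2)) (e (x 0 3)) (e (x 1 2)) (e (x 1 3))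
    (hatomF 0 2 (Or.inl rfl) (Or.inl rfl)) (hatomF 0 3 (Or.inl rfl) (Or.inr rfl))
    (hatomF 1 2 (Or.inr rfl) (Or.inl rfl)) ?_ ?_ ?_
  · intro h
    exact hne 0 2 0 3 (Or.inl rfl) (Or.inl rfl) (Or.inl rfl) (Or.inr rfl)
      (Or.inr (by decide)) (e.injective h)
  · intro h
    exact hne 0 2 1 2 (Or.inl rfl) (Or.inl rfl) (Or.inr rfl) (Or.inl rfl)
      (Or.inl (by decide)) (e.injective h)
  · rw [← map_add, ← map_add, hrel]
end
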